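/- arXiv:2103.00341 — 4 statements merged into one kernel-verified Lean document; each statement's English description precedes it below -/
import Mathlib

section
/- For a graph G of order n with maximum degree Δ, and any t ≥ 1, the maximum degree of M^t(G) equals max(2^{t-1}(n+1) - 1, 2^t·Δ). -/
open SimpleGraph

abbrev MycVert (V : Type) : Type := V ⊕ V ⊕ Unit

def mycAdj {V : Type} (G : SimpleGraph V) : MycVert V → MycVert V → Prop
  | Sum.inl a, Sum.inl b => G.Adj a b
  | Sum.inl a, Sum.inr (Sum.inl b) => G.Adj a b
  | Sum.inr (Sum.inl a), Sum.inl b => G.Adj a b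
  | Sum.inr (Sum.inl _), Sum.inr (Sum.inr _) => True
  | Sum.inr (Sum.inr _), Sum.inr (Sum.inl _) => True
  | _, _ => False

/-- The Mycielski graph of `G`: `Sum.inl v` are original vertices, `Sum.inr (Sum.inl v)`
their copies, and `Sum.inr (Sum.inr ())` is the root. -/
def mycielski {V : Type} (G : SimpleGraph V) : SimpleGraph (MycVert V) where
  Adj := mycAdj G
  symm := ⟨by
    rintro (a | a | a) (b | b | b) h <;>
      first | exact G.adj_symm h | trivial | exact h.elim⟩
  loopless := ⟨by
    rintro (a | a | a) h <;> first | exact G.irrefl h | exact h⟩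

def IterMycVert (V : Type) : ℕ → Type
  | 0 => V
  | t + 1 => MycVert (IterMycVert V t)

/-- The `t`-th iterated Mycielski graph. -/
def iterMycielski {V : Type} (G : SimpleGraph V) : (t : ℕ) → SimpleGraph (IterMycVert V t)
  | 0 => G
  | t + 1 => mycielski (iterMycielski G t)

instance iterMycVertFintype (V : Type) [Fintype V] : (t : ℕ) → Fintype (IterMycVert V t)
  | 0 => inferInstanceAs (Fintype V)
  | t + 1 => letI := iterMycVertFintype V t
             inferInstanceAs (Fintype (MycVert (IterMycVert V t)))

/-- `f` is an `L(2,1)`-labeling of `G`. -/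
def IsL21Labeling {V : Type} (G : SimpleGraph V) (f : V → ℕ) : Prop :=
  (∀ x y, G.Adj x y → 2 ≤ ((f x : ℤ) - (f y : ℤ)).natAbs) ∧
  (∀ x y, G.dist x y = 2 → f x ≠ f y)

/-- The `L(2,1)`-labeling number `λ(G)`: the least `k` such that `G` has an
`L(2,1)`-labeling with labels in `{0, …, k}`. -/
noncomputable def lambdaNumber {V : Type} (G : SimpleGraph V) : ℕ :=
  sInf {k | ∃ f : V → ℕ, IsL21Labeling G f ∧ ∀ v, f v ≤ k}

/-!
A vertex `v` of `G` keeps its neighbours in `M(G)` and gains their copies, so its degree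
doubles; its copy `v'` sees the neighbours of `v` and the root, so it has degree
`deg v + 1 ≤ |V|`; the root has degree `|V|`. Hence `Δ(M(G)) = max |V| (2 Δ(G))`.
Since `|V(M^t(G))| + 1 = 2^t (|V| + 1)`, iterating gives the formula: the term coming from
the previous root, doubled, is one below the new root degree and so never wins.
-/

namespace mycielski

variable {V : Type} (G : SimpleGraph V)

def neighborSetInlEquiv (v : V) :
    (mycielski G).neighborSet (Sum.inl v) ≃ G.neighborSet v ⊕ G.neighborSet v where
  toFun := fun ⟨x, hx⟩ => match x, hx with
    | Sum.inl b, hb => Sum.inl ⟨b, hb⟩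
    | Sum.inr (Sum.inl b), hb => Sum.inr ⟨b, hb⟩
  invFun
    | Sum.inl ⟨b, hb⟩ => ⟨Sum.inl b, hb⟩
    | Sum.inr ⟨b, hb⟩ => ⟨Sum.inr (Sum.inl b), hb⟩
  left_inv := by rintro ⟨b | b | b, hb⟩ <;> first | rfl | exact hb.elim
  right_inv := by rintro (⟨b, hb⟩ | ⟨b, hb⟩) <;> rfl

def neighborSetCopyEquiv (v : V) :
    (mycielski G).neighborSet (Sum.inr (Sum.inl v)) ≃ G.neighborSet v ⊕ Unit where
  toFun := fun ⟨x, hx⟩ => match x, hx with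
    | Sum.inl b, hb => Sum.inl ⟨b, hb⟩
    | Sum.inr (Sum.inr _), _ => Sum.inr ()
  invFun
    | Sum.inl ⟨b, hb⟩ => ⟨Sum.inl b, hb⟩
    | Sum.inr _ => ⟨Sum.inr (Sum.inr ()), trivial⟩
  left_inv := by rintro ⟨b | b | b, hb⟩ <;> first | rfl | exact hb.elim
  right_inv := by rintro (⟨b, hb⟩ | ⟨⟩) <;> rfl

def neighborSetRootEquiv (u : Unit) : (mycielski G).neighborSet (Sum.inr (Sum.inr u)) ≃ V where
  toFun := fun ⟨x, hx⟩ => match x, hx with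
    | Sum.inr (Sum.inl b), _ => b
  invFun b := ⟨Sum.inr (Sum.inl b), trivial⟩
  left_inv := by rintro ⟨b | b | b, hb⟩ <;> first | rfl | exact hb.elim
  right_inv _ := rfl

variable [Fintype V] [DecidableRel (mycielski G).Adj]

theorem degree_root (u : Unit) :
    (mycielski G).degree (Sum.inr (Sum.inr u)) = Fintype.card V := by
  rw [← card_neighborSet_eq_degree, Fintype.card_congr (neighborSetRootEquiv G u)]

variable [DecidableRel G.Adj]

theorem degree_inl (v : V) : (mycielski G).degree (Sum.inl v) = 2 * G.degree v := by
  rw [← card_neighborSet_eq_degree, ← card_neighborSet_eq_degree,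
    Fintype.card_congr (neighborSetInlEquiv G v), Fintype.card_sum, two_mul]

theorem degree_copy (v : V) :
    (mycielski G).degree (Sum.inr (Sum.inl v)) = G.degree v + 1 := by
  rw [← card_neighborSet_eq_degree, ← card_neighborSet_eq_degree,
    Fintype.card_congr (neighborSetCopyEquiv G v), Fintype.card_sum, Fintype.card_unit]

theorem two_mul_maxDegree_le : 2 * G.maxDegree ≤ (mycielski G).maxDegree := by
  cases isEmpty_or_nonempty V with
  | inl _ =>
    rw [Nat.le_zero.mp (G.maxDegree_le_of_forall_degree_le 0 isEmptyElim)]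
    exact Nat.zero_le _
  | inr _ =>
    obtain ⟨v, hv⟩ := G.exists_maximal_degree_vertex
    rw [hv, ← degree_inl]
    exact degree_le_maxDegree _ _

theorem maxDegree_eq : (mycielski G).maxDegree = max (Fintype.card V) (2 * G.maxDegree) := by
  refine le_antisymm (maxDegree_le_of_forall_degree_le _ _ ?_) ?_
  · rintro (v | v | u)
    · rw [degree_inl]
      exact le_max_of_le_right (Nat.mul_le_mul_left 2 (G.degree_le_maxDegree v))
    · rw [degree_copy]
      exact le_max_of_le_left (G.degree_lt_card_verts v)
    · rw [degree_root]
      exact le_max_left _ _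
  · refine max_le ?_ (two_mul_maxDegree_le G)
    rw [← degree_root G ()]
    exact degree_le_maxDegree _ _

end mycielski

theorem card_mycVert (V : Type) [Fintype V] :
    Fintype.card (MycVert V) = 2 * Fintype.card V + 1 := by
  rw [Fintype.card_sum, Fintype.card_sum, Fintype.card_unit, two_mul, add_assoc]

theorem card_iterMycVert_add_one (V : Type) [Fintype V] (t : ℕ) :
    Fintype.card (IterMycVert V t) + 1 = 2 ^ t * (Fintype.card V + 1) := by
  induction t with
  | zero => simp only [pow_zero, one_mul]; rfl
  | succ t ih =>
    rw [pow_succ', mul_assoc, ← ih]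
    exact congrArg (· + 1) (card_mycVert (IterMycVert V t))

open scoped Classical in
theorem iterMycielski_succ_maxDegree_eq_max {V : Type} [Fintype V] (G : SimpleGraph V) (t : ℕ) :
    (iterMycielski G (t + 1)).maxDegree =
      max (Fintype.card (IterMycVert V t)) (2 * (iterMycielski G t).maxDegree) :=
  mycielski.maxDegree_eq _

open scoped Classical in
theorem iterMycielski_succ_maxDegree {V : Type} [Fintype V] (G : SimpleGraph V) (t : ℕ) :
    (iterMycielski G (t + 1)).maxDegree =
      max (2 ^ t * (Fintype.card V + 1) - 1) (2 ^ (t + 1) * G.maxDegree) := by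
  induction t with
  | zero =>
    rw [iterMycielski_succ_maxDegree_eq_max]
    simp only [pow_zero, one_mul, Nat.add_sub_cancel]
    rfl
  | succ t ih =>
    have hcard := card_iterMycVert_add_one V (t + 1)
    have hroot : 2 ^ (t + 1) * (Fintype.card V + 1) = 2 * (2 ^ t * (Fintype.card V + 1)) := by
      ring
    have hdeg : 2 ^ (t + 1 + 1) * G.maxDegree = 2 * (2 ^ (t + 1) * G.maxDegree) := by ring
    have hpos : 0 < 2 ^ t * (Fintype.card V + 1) := by positivity
    rw [iterMycielski_succ_maxDegree_eq_max, ih]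
    omega

open scoped Classical in
/-- For a graph `G` of order `n` with maximum degree `Δ`, and any `t ≥ 1`, the maximum degree
of `M^t(G)` equals `max (2^(t-1) * (n+1) - 1) (2^t * Δ)`. -/
theorem iterMycielski_maxDegree {V : Type} [Fintype V] (G : SimpleGraph V) (n t : ℕ)
    (hn : Fintype.card V = n) (ht : 1 ≤ t) :
    (iterMycielski G t).maxDegree =
      max (2 ^ (t - 1) * (n + 1) - 1) (2 ^ t * G.maxDegree) := by
  obtain ⟨s, rfl⟩ := Nat.exists_eq_add_of_le' ht
  subst hn
  exact iterMycielski_succ_maxDegree G s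
end

section
/- If G is a graph of diameter 2 with maximum degree Δ, then λ(M(G)) ≤ 2(Δ² + 1). -/
open SimpleGraph

/-!
Give `v ∈ V` the label `2 a(v) + 1`, its copy `2 a(v) + 2` and the root `0`, where `a` is an
injective labeling of `G` whose values on adjacent vertices differ by at least `2`. Such an `a`
with span `L = max (n - 1) (2Δ)` comes from a Hamiltonian cycle, provided by Ore's theorem, in
the join of `Gᶜ` with `L + 2 - n` independent vertices: numbering the cycle from one of these
extra vertices, `G`-adjacent vertices never receive consecutive numbers. For diameter `2`, the
Moore bound `n ≤ Δ² + 1` and `Δ ≥ 2` give `L ≤ Δ²`.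
-/

namespace ZMod

variable {m : ℕ}

def reflectUpTo (j k : ZMod m) : ZMod m := if k.val ≤ j.val then j - k else k

lemma reflectUpTo_of_val_le {j k : ZMod m} (h : k.val ≤ j.val) : reflectUpTo j k = j - k :=
  if_pos h

lemma reflectUpTo_of_val_lt {j k : ZMod m} (h : j.val < k.val) : reflectUpTo j k = k :=
  if_neg (not_le.2 h)

variable [NeZero m]

lemma reflectUpTo_involutive (j : ZMod m) : Function.Involutive (reflectUpTo j) := by
  intro k
  rcases le_or_gt k.val j.val with h | h
  · rw [reflectUpTo_of_val_le h, reflectUpTo_of_val_le (by rw [val_sub h]; omega), sub_sub_cancel]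
  · rw [reflectUpTo_of_val_lt h, reflectUpTo_of_val_lt h]

lemma val_neg_one_eq_sub_one : (-1 : ZMod m).val = m - 1 := by
  obtain ⟨n, rfl⟩ := Nat.exists_eq_succ_of_ne_zero (NeZero.ne m)
  simp [val_neg_one]

lemma val_lt_sub_one_of_ne_neg_one {i : ZMod m} (hi : i ≠ -1) : i.val < m - 1 := by
  have hne : i.val ≠ (-1 : ZMod m).val := fun h => hi (val_injective m h)
  have := i.val_lt
  rw [val_neg_one_eq_sub_one] at hne
  omega

lemma val_add_one_of_ne_neg_one {i : ZMod m} (hi : i ≠ -1) : (i + 1).val = i.val + 1 := by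
  have hlt := val_lt_sub_one_of_ne_neg_one hi
  calc (i + 1).val = ((i.val + 1 : ℕ) : ZMod m).val := by rw [Nat.cast_succ, natCast_zmod_val]
    _ = i.val + 1 := val_natCast_of_lt (by omega)

end ZMod

namespace SimpleGraph

variable {W : Type*} {m : ℕ}

section Cyclic

variable [Fintype W] (H : SimpleGraph W) [DecidableRel H.Adj] [NeZero m]

lemma exists_crossing (σ : ZMod m ≃ W) (hdeg : m ≤ H.degree (σ (-1)) + H.degree (σ 0)) :
    ∃ j, H.Adj (σ (-1)) (σ j) ∧ H.Adj (σ 0) (σ (j + 1)) := by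
  classical
  set A := (H.neighborFinset (σ (-1))).map σ.symm.toEmbedding
  set B := (H.neighborFinset (σ 0)).map (σ.symm.trans (Equiv.subRight 1)).toEmbedding
  have hA : A ⊆ Finset.univ.erase (-1) := by
    intro k hk
    rw [Finset.mem_map_equiv, Equiv.symm_symm, mem_neighborFinset] at hk
    exact Finset.mem_erase.2 ⟨by rintro rfl; exact H.irrefl hk, Finset.mem_univ _⟩
  have hB : B ⊆ Finset.univ.erase (-1) := by
    intro k hk
    rw [Finset.mem_map_equiv, Equiv.symm_trans_apply, Equiv.subRight_symm_apply, Equiv.symm_symm,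
      mem_neighborFinset] at hk
    exact Finset.mem_erase.2 ⟨by rintro rfl; simp at hk, Finset.mem_univ _⟩
  have hcard : (Finset.univ.erase (-1 : ZMod m)).card < A.card + B.card := by
    simp only [A, B, Finset.card_map, card_neighborFinset_eq_degree]
    rw [Finset.card_erase_of_mem (Finset.mem_univ _), Finset.card_univ, ZMod.card]
    have := NeZero.pos m
    omega
  obtain ⟨j, hj⟩ := Finset.inter_nonempty_of_card_lt_card_add_card hA hB hcard
  simp only [Finset.mem_inter, A, B, Finset.mem_map_equiv, mem_neighborFinset] at hj
  exact ⟨j, by simpa using hj.1, by simpa using hj.2⟩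

theorem exists_cyclic_of_path (σ : ZMod m ≃ W) (hσ : ∀ i ≠ -1, H.Adj (σ i) (σ (i + 1)))
    (hdeg : m ≤ H.degree (σ (-1)) + H.degree (σ 0)) :
    ∃ τ : ZMod m ≃ W, ∀ i, H.Adj (τ i) (τ (i + 1)) := by
  obtain ⟨j, hj₁, hj₂⟩ := H.exists_crossing σ hdeg
  have hj : j.val < m - 1 := ZMod.val_lt_sub_one_of_ne_neg_one (by rintro rfl; exact H.irrefl hj₁)
  -- Reversing positions `0, …, j` trades the pair `σ (-1), σ 0` for the edges
  -- `σ (-1) ~ σ j` and `σ 0 ~ σ (j + 1)`.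
  refine ⟨(ZMod.reflectUpTo_involutive j).toPerm.trans σ, fun i => ?_⟩
  simp only [Equiv.trans_apply, Function.Involutive.coe_toPerm]
  by_cases hi : i = -1
  · subst hi
    rwa [ZMod.reflectUpTo_of_val_lt (by rw [ZMod.val_neg_one_eq_sub_one]; omega),
      neg_add_cancel, ZMod.reflectUpTo_of_val_le (by simp), sub_zero]
  have hi₁ := ZMod.val_add_one_of_ne_neg_one hi
  rcases lt_trichotomy i.val j.val with h | h | h
  · rw [ZMod.reflectUpTo_of_val_le h.le, ZMod.reflectUpTo_of_val_le (by omega)]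
    have hne : j - (i + 1) ≠ -1 := fun h' => h.ne (congrArg ZMod.val (by linear_combination -h'))
    have hadj := (hσ _ hne).symm
    rwa [show j - (i + 1) + 1 = j - i by ring] at hadj
  · obtain rfl := ZMod.val_injective m h
    rwa [ZMod.reflectUpTo_of_val_le le_rfl, sub_self, ZMod.reflectUpTo_of_val_lt (by omega)]
  · rw [ZMod.reflectUpTo_of_val_lt h, ZMod.reflectUpTo_of_val_lt (by omega)]
    exact hσ i hi

theorem exists_cyclic_of_adj_ne (σ : ZMod m ≃ W) (i : ZMod m)
    (hσ : ∀ k ≠ i, H.Adj (σ k) (σ (k + 1))) (hdeg : m ≤ H.degree (σ i) + H.degree (σ (i + 1))) :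
    ∃ τ : ZMod m ≃ W, ∀ k, H.Adj (τ k) (τ (k + 1)) := by
  set τ := (Equiv.addRight (i + 1)).trans σ
  have hτ (k : ZMod m) : τ k = σ (k + (i + 1)) := rfl
  refine H.exists_cyclic_of_path τ (fun k hk => ?_) ?_
  · rw [hτ, hτ, add_right_comm k 1]
    exact hσ _ fun h => hk (by linear_combination h)
  · rwa [hτ, hτ, show -1 + (i + 1) = i by ring, zero_add]

end Cyclic

lemma adj_of_sup_edge_of_ne {H : SimpleGraph W} {u v : W} {σ : ZMod m ≃ W} (hm : 3 ≤ m)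
    (hσ : ∀ k, (H ⊔ edge u v).Adj (σ k) (σ (k + 1))) {i : ZMod m}
    (hi : ¬ H.Adj (σ i) (σ (i + 1))) : ∀ k ≠ i, H.Adj (σ k) (σ (k + 1)) := by
  intro k hki
  by_contra hk
  have hedge : ∀ l, ¬ H.Adj (σ l) (σ (l + 1)) →
      σ l = u ∧ σ (l + 1) = v ∨ σ l = v ∧ σ (l + 1) = u := fun l hl => by
    have h := hσ l
    rw [sup_adj, edge_adj] at h
    exact (h.resolve_left hl).1
  have hm2 : (2 : ZMod m) ≠ 0 := by
    rw [← Nat.cast_ofNat, Ne, ZMod.natCast_eq_zero_iff]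
    exact fun h => by have := Nat.le_of_dvd two_pos h; omega
  have hturn : k = i + 1 → k + 1 = i → False := fun h₁ h₂ => hm2 (by linear_combination h₂ - h₁)
  rcases hedge i hi with ⟨hi₁, hi₂⟩ | ⟨hi₁, hi₂⟩ <;>
    rcases hedge k hk with ⟨hk₁, hk₂⟩ | ⟨hk₁, hk₂⟩ <;>
    first
      | exact hki (σ.injective (hk₁.trans hi₁.symm))
      | exact hturn (σ.injective (hk₁.trans hi₂.symm)) (σ.injective (hk₂.trans hi₁.symm))

theorem exists_cyclic_of_ore [Fintype W] (H : SimpleGraph W) [DecidableRel H.Adj]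
    (hW : Fintype.card W = m) (hm : 3 ≤ m)
    (hore : ∀ u v, u ≠ v → ¬ H.Adj u v → m ≤ H.degree u + H.degree v) :
    ∃ σ : ZMod m ≃ W, ∀ i, H.Adj (σ i) (σ (i + 1)) := by
  rename_i hdec
  have : Fact (1 < m) := ⟨by omega⟩
  revert hdec hore
  induction H using WellFoundedGT.induction with
  | _ H ih =>
  intro _ hore
  by_cases hcomplete : ∀ u v, u ≠ v → H.Adj u v
  · let σ : ZMod m ≃ W := Fintype.equivOfCardEq (by rw [ZMod.card, hW])
    exact ⟨σ, fun i => hcomplete _ _ (σ.injective.ne (by simp))⟩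
  push Not at hcomplete
  obtain ⟨u, v, huv, hnadj⟩ := hcomplete
  -- A Hamiltonian cycle of `H ⊔ edge u v` that uses `uv` is a Hamiltonian path of `H` from `u`
  -- to `v`, which Ore's condition on `u, v` closes up.
  classical
  obtain ⟨σ, hσ⟩ := ih (H ⊔ edge u v) (H.lt_sup_edge u v huv hnadj)
    fun x y hxy hxy' => (hore x y hxy fun h => hxy' (Or.inl h)).trans
      (add_le_add (degree_le_of_le le_sup_left) (degree_le_of_le le_sup_left))
  by_cases hgood : ∀ i, H.Adj (σ i) (σ (i + 1))
  · exact ⟨σ, hgood⟩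
  push Not at hgood
  obtain ⟨i, hi⟩ := hgood
  refine H.exists_cyclic_of_adj_ne σ i (adj_of_sup_edge_of_ne hm hσ hi) ?_
  have hi' := hσ i
  rw [sup_adj, edge_adj] at hi'
  rcases hi'.resolve_left hi with ⟨⟨h₁, h₂⟩ | ⟨h₁, h₂⟩, -⟩
  · rw [h₁, h₂]; exact hore u v huv hnadj
  · rw [h₁, h₂, add_comm]; exact hore u v huv hnadj

variable {V : Type*} (G : SimpleGraph V)

def complJoinEmpty (k : ℕ) : SimpleGraph (V ⊕ Fin k) :=
  (Gᶜ ⊕g ⊥) ⊔ completeBipartiteGraph V (Fin k)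

variable {G} {k : ℕ}

@[simp]
lemma complJoinEmpty_adj_inl_inl {a b : V} :
    (G.complJoinEmpty k).Adj (.inl a) (.inl b) ↔ Gᶜ.Adj a b := by
  simp [complJoinEmpty, sup_adj]

@[simp]
lemma complJoinEmpty_adj_inl_inr {a : V} {i : Fin k} :
    (G.complJoinEmpty k).Adj (.inl a) (.inr i) := by
  simp [complJoinEmpty, sup_adj]

@[simp]
lemma complJoinEmpty_adj_inr_inl {a : V} {i : Fin k} :
    (G.complJoinEmpty k).Adj (.inr i) (.inl a) := by
  simp [complJoinEmpty, sup_adj]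

@[simp]
lemma not_complJoinEmpty_adj_inr_inr {i j : Fin k} :
    ¬ (G.complJoinEmpty k).Adj (.inr i) (.inr j) := by
  simp [complJoinEmpty, sup_adj]

lemma exists_labeling_of_cyclic {m : ℕ} [NeZero m] (σ : ZMod m ≃ V ⊕ Fin k)
    (hσ : ∀ i, (G.complJoinEmpty k).Adj (σ i) (σ (i + 1))) (i₀ : Fin k) :
    ∃ a : V → ℕ, Function.Injective a ∧ (∀ x y, G.Adj x y → 2 ≤ ((a x : ℤ) - a y).natAbs) ∧
      ∀ v, a v ≤ m - 2 := by
  -- positions on the cycle, counted so that the extra vertex `i₀` sits at `-1`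
  set p : V → ZMod m := fun v => σ.symm (.inl v) - (σ.symm (.inr i₀) + 1)
  have hp : ∀ v, p v ≠ -1 := fun v h =>
    Sum.inl_ne_inr (σ.symm.injective (by linear_combination h))
  have hp_inj : Function.Injective p :=
    (sub_left_injective).comp (σ.symm.injective.comp Sum.inl_injective)
  have hnext : ∀ x y, G.Adj x y → (p y).val ≠ (p x).val + 1 := by
    intro x y hxy h
    rw [← ZMod.val_add_one_of_ne_neg_one (hp x)] at h
    have hyx : σ.symm (.inl y) = σ.symm (.inl x) + 1 := by
      linear_combination ZMod.val_injective m h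
    have hσx := hσ (σ.symm (.inl x))
    rw [← hyx, Equiv.apply_symm_apply, Equiv.apply_symm_apply, complJoinEmpty_adj_inl_inl,
      compl_adj] at hσx
    exact hσx.2 hxy
  refine ⟨fun v => (p v).val, (ZMod.val_injective m).comp hp_inj, fun x y hxy => ?_, fun v => ?_⟩
  · have h₁ := hnext x y hxy
    have h₂ := hnext y x hxy.symm
    have h₃ : (p x).val ≠ (p y).val := fun h => G.ne_of_adj hxy (hp_inj (ZMod.val_injective m h))
    beta_reduce
    omega
  · have := ZMod.val_lt_sub_one_of_ne_neg_one (hp v)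
    beta_reduce
    omega

section Degree

variable [Fintype V] [DecidableRel (G.complJoinEmpty k).Adj]

lemma degree_complJoinEmpty_inr (i : Fin k) :
    (G.complJoinEmpty k).degree (.inr i) = Fintype.card V := by
  have : (G.complJoinEmpty k).neighborFinset (.inr i) = Finset.univ.disjSum ∅ := by
    ext (b | j) <;> simp
  rw [← card_neighborFinset_eq_degree, this, Finset.card_disjSum, Finset.card_univ,
    Finset.card_empty, add_zero]

variable [DecidableRel G.Adj]

lemma degree_complJoinEmpty_inl (a : V) :
    (G.complJoinEmpty k).degree (.inl a) = Fintype.card V - 1 - G.degree a + k := by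
  classical
  have : (G.complJoinEmpty k).neighborFinset (.inl a) = (Gᶜ.neighborFinset a).disjSum .univ := by
    ext (b | i) <;> simp
  rw [← card_neighborFinset_eq_degree, this, Finset.card_disjSum, card_neighborFinset_eq_degree,
    degree_compl, Finset.card_univ, Fintype.card_fin]

lemma complJoinEmpty_ore (hk : k ≤ Fintype.card V)
    (hΔ : 2 * G.maxDegree + 2 ≤ Fintype.card V + k) (x y : V ⊕ Fin k) (hxy : x ≠ y)
    (hnadj : ¬ (G.complJoinEmpty k).Adj x y) :
    Fintype.card V + k ≤ (G.complJoinEmpty k).degree x + (G.complJoinEmpty k).degree y := by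
  rcases x with a | i <;> rcases y with b | j
  · have hab : G.Adj a b := by
      simp only [complJoinEmpty_adj_inl_inl, compl_adj, not_and, not_not] at hnadj
      exact hnadj fun h => hxy (congrArg _ h)
    rw [degree_complJoinEmpty_inl, degree_complJoinEmpty_inl]
    have := G.degree_le_maxDegree a
    have := G.degree_le_maxDegree b
    have := G.degree_lt_card_verts a
    have := G.degree_lt_card_verts b
    omega
  · exact absurd complJoinEmpty_adj_inl_inr hnadj
  · exact absurd complJoinEmpty_adj_inr_inl hnadj
  · rw [degree_complJoinEmpty_inr, degree_complJoinEmpty_inr]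
    omega

end Degree

variable (G) in
theorem exists_injective_labeling_le_max [Fintype V] [DecidableRel G.Adj] :
    ∃ a : V → ℕ, Function.Injective a ∧ (∀ x y, G.Adj x y → 2 ≤ ((a x : ℤ) - a y).natAbs) ∧
      ∀ v, a v ≤ max (Fintype.card V - 1) (2 * G.maxDegree) := by
  classical
  rcases le_or_gt (Fintype.card V) 1 with hV | hV
  · have := Fintype.card_le_one_iff_subsingleton.1 hV
    exact ⟨0, Function.injective_of_subsingleton _,
      fun x y h => absurd (Subsingleton.elim x y) (G.ne_of_adj h), fun _ => Nat.zero_le _⟩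
  have : Nonempty V := Fintype.card_pos_iff.1 (by omega)
  have hΔ := G.maxDegree_lt_card_verts
  set L := max (Fintype.card V - 1) (2 * G.maxDegree)
  set k := L + 2 - Fintype.card V
  have : NeZero (Fintype.card V + k) := ⟨by omega⟩
  obtain ⟨σ, hσ⟩ := (G.complJoinEmpty k).exists_cyclic_of_ore (by simp) (by omega)
    (complJoinEmpty_ore (by omega) (by omega))
  obtain ⟨a, ha, hgap, hspan⟩ := exists_labeling_of_cyclic σ hσ ⟨0, by omega⟩
  exact ⟨a, ha, hgap, fun v => (hspan v).trans (by omega)⟩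

variable [Fintype V] [DecidableRel G.Adj]

theorem card_le_maxDegree_sq_add_one (h : G.ediam ≤ 2) :
    Fintype.card V ≤ G.maxDegree ^ 2 + 1 := by
  classical
  rcases isEmpty_or_nonempty V with hV | ⟨⟨v⟩⟩
  · simp
  have hcover : (Finset.univ : Finset V) ⊆ insert v
      ((G.neighborFinset v).biUnion fun w => insert w ((G.neighborFinset w).erase v)) := by
    intro u _
    by_cases huv : u = v
    · simp [huv]
    by_cases hadj : G.Adj v u
    · exact Finset.mem_insert_of_mem
        (Finset.mem_biUnion.2 ⟨u, by simpa, Finset.mem_insert_self _ _⟩)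
    have hcommon : (G.commonNeighbors v u).Nonempty := by
      by_contra hc
      rw [Set.not_nonempty_iff_eq_empty] at hc
      exact (edist_le_ediam.trans h).not_gt (two_lt_edist_iff.2 ⟨Ne.symm huv, hadj, hc⟩)
    obtain ⟨w, hvw, huw⟩ := hcommon
    refine Finset.mem_insert_of_mem (Finset.mem_biUnion.2 ⟨w, by simpa using hvw, ?_⟩)
    exact Finset.mem_insert_of_mem (Finset.mem_erase.2 ⟨huv, by simpa using huw.symm⟩)
  have hblock : ∀ w ∈ G.neighborFinset v,
      (insert w ((G.neighborFinset w).erase v)).card ≤ G.maxDegree := by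
    intro w hw
    have hvw : v ∈ G.neighborFinset w := by simpa [adj_comm] using hw
    calc (insert w ((G.neighborFinset w).erase v)).card
        ≤ ((G.neighborFinset w).erase v).card + 1 := Finset.card_insert_le _ _
      _ = G.degree w := by
        rw [Finset.card_erase_of_mem hvw, card_neighborFinset_eq_degree]
        have := (G.degree_pos_iff_exists_adj w).2 ⟨v, by simpa using hvw⟩
        omega
      _ ≤ G.maxDegree := G.degree_le_maxDegree w
  calc Fintype.card V = (Finset.univ : Finset V).card := Finset.card_univ.symm
    _ ≤ _ := Finset.card_le_card hcover
    _ ≤ _ + 1 := Finset.card_insert_le _ _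
    _ ≤ (G.neighborFinset v).card * G.maxDegree + 1 :=
      Nat.add_le_add_right (Finset.card_biUnion_le_card_mul _ _ _ hblock) 1
    _ ≤ G.maxDegree ^ 2 + 1 := by
      rw [card_neighborFinset_eq_degree, sq]
      gcongr
      exact G.degree_le_maxDegree v

theorem two_le_maxDegree_of_ediam_eq_two (h : G.ediam = 2) : 2 ≤ G.maxDegree := by
  classical
  have : Nontrivial V := nontrivial_of_ediam_ne_zero (by rw [h]; norm_num)
  obtain ⟨u, v, huv⟩ := G.exists_edist_eq_ediam_of_finite
  obtain ⟨hne, -, w, hw⟩ := edist_eq_two_iff.1 (huv.trans h)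
  rw [mem_commonNeighbors] at hw
  have hsub : ({u, v} : Finset V) ⊆ G.neighborFinset w := by
    intro x hx
    rcases Finset.mem_insert.1 hx with rfl | hx
    · simpa using hw.1.symm
    · simpa [Finset.mem_singleton.1 hx] using hw.2.symm
  calc 2 = ({u, v} : Finset V).card := (Finset.card_pair hne).symm
    _ ≤ G.degree w := (Finset.card_le_card hsub).trans_eq (card_neighborFinset_eq_degree _ _)
    _ ≤ G.maxDegree := G.degree_le_maxDegree w

end SimpleGraph

variable {V : Type} {G : SimpleGraph V}

lemma isL21Labeling_of_injective {f : V → ℕ} (hf : Function.Injective f)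
    (hgap : ∀ x y, G.Adj x y → 2 ≤ ((f x : ℤ) - f y).natAbs) : IsL21Labeling G f :=
  ⟨hgap, fun x y h => hf.ne (by rintro rfl; simp at h)⟩

lemma lambdaNumber_le_of_isL21Labeling {f : V → ℕ} (hf : IsL21Labeling G f) {k : ℕ}
    (hk : ∀ v, f v ≤ k) : lambdaNumber G ≤ k :=
  Nat.sInf_le ⟨f, hf, hk⟩

theorem lambdaNumber_mycielski_le {a : V → ℕ} {L : ℕ} (ha : Function.Injective a)
    (hgap : ∀ x y, G.Adj x y → 2 ≤ ((a x : ℤ) - a y).natAbs) (hL : ∀ v, a v ≤ L) :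
    lambdaNumber (mycielski G) ≤ 2 * (L + 1) := by
  let F : MycVert V → ℕ := Sum.elim (fun v => 2 * a v + 1) (Sum.elim (fun v => 2 * a v + 2) 0)
  refine lambdaNumber_le_of_isL21Labeling (isL21Labeling_of_injective (f := F) ?_ ?_) ?_
  · rintro (x | x | ⟨⟩) (y | y | ⟨⟩) h <;>
      simp only [F, Sum.elim_inl, Sum.elim_inr, Pi.zero_apply] at h
    all_goals first | omega | rfl | rw [ha (by omega : a x = a y)]
  · rintro (x | x | ⟨⟩) (y | y | ⟨⟩) hxy <;> simp only [mycielski, mycAdj] at hxy <;>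
      simp only [F, Sum.elim_inl, Sum.elim_inr, Pi.zero_apply]
    all_goals first | exact hxy.elim | omega | (have := hgap x y hxy; omega)
  · rintro (v | v | ⟨⟩) <;> simp only [F, Sum.elim_inl, Sum.elim_inr, Pi.zero_apply]
    all_goals first | omega | (have := hL v; omega)

open scoped Classical in
/-- If `G` is a graph of diameter 2 with maximum degree `Δ`, then `λ(M(G)) ≤ 2(Δ² + 1)`. -/
theorem lambdaNumber_mycielski_diam_two {V : Type} [Fintype V] (G : SimpleGraph V)
    (hdiam : G.ediam = 2) :
    lambdaNumber (mycielski G) ≤ 2 * (G.maxDegree ^ 2 + 1) := by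
  obtain ⟨a, ha, hgap, hspan⟩ := G.exists_injective_labeling_le_max
  have hmoore := G.card_le_maxDegree_sq_add_one hdiam.le
  have hΔ := G.two_le_maxDegree_of_ediam_eq_two hdiam
  refine lambdaNumber_mycielski_le ha hgap fun v => (hspan v).trans (max_le (by omega) ?_)
  nlinarith
end

section
/- If G is a graph of order n with clique number ω(G) ≤ 4, then λ(M(G)) ≤ 2n. -/
open SimpleGraph

/-!
Label the vertices of a graph `H` by their positions in a list `L` of all of them in which
consecutive entries are non-adjacent (a Hamiltonian path of the complement): adjacent vertices
then get labels at distance at least `2`, distinct vertices distinct labels, so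
`λ(H) ≤ |L| - 1`.

Since `ω(G) ≤ 4`, the complement of `G` is covered by at most four disjoint paths: in a
shortest cover the last vertices of the paths are pairwise adjacent in `G`, since two paths with
non-adjacent last vertices could be joined. Writing `v'` for the copy of `v` and `r` for the
root of `M(G)`, the copies are pairwise non-adjacent, `v` is not adjacent to `v'`, and `r` is
adjacent to no original vertex. Hence the paths `P₁, …, P₄` combine into the route
`P₁, (copies), P₂, r, P₃, (copies), P₄` through all `2n + 1` vertices of `M(G)`; missing paths
are taken empty, placed so that the neighbours of `r` in the route stay original vertices.
-/

section Labeling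

variable {W : Type} (H : SimpleGraph W)

theorem isL21Labeling_of_injective_s9 {f : W → ℕ} (hf : Function.Injective f)
    (hadj : ∀ x y, H.Adj x y → f y ≠ f x + 1) : IsL21Labeling H f := by
  refine ⟨fun x y hxy => ?_, fun x y hd hxy => ?_⟩
  · have hne : f x ≠ f y := hf.ne hxy.ne
    have h₁ := hadj x y hxy
    have h₂ := hadj y x hxy.symm
    omega
  · rw [hf hxy, SimpleGraph.dist_self] at hd
    exact absurd hd (by norm_num)

theorem lambdaNumber_le_of_isChain_not_adj (L : List W) (hmem : ∀ w, w ∈ L)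
    (hL : L.IsChain (fun x y => ¬ H.Adj x y)) : lambdaNumber H ≤ L.length - 1 := by
  classical
  have hlt (w : W) : L.idxOf w < L.length := List.idxOf_lt_length_of_mem (hmem w)
  have hlabel : IsL21Labeling H (L.idxOf ·) := by
    refine isL21Labeling_of_injective_s9 H (fun x y h => (List.idxOf_inj (hmem x)).1 h) ?_
    intro x y hxy hidx
    refine List.isChain_iff_getElem.1 hL (L.idxOf x) (by rw [← hidx]; exact hlt y) ?_
    simpa only [← hidx, List.getElem_idxOf] using hxy
  exact Nat.sInf_le ⟨_, hlabel, fun w => Nat.le_sub_one_of_lt (hlt w)⟩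

end Labeling

section ChainPartition

variable {α : Type*} (R : α → α → Prop)

/-- For `R = fun a b => ¬ G.Adj a b` this is a cover of the vertices by disjoint paths of the
complement of `G`. -/
structure IsChainPartition (ps : List (List α)) : Prop where
  nodup : ps.flatten.Nodup
  mem_flatten : ∀ a, a ∈ ps.flatten
  ne_nil : ∀ p ∈ ps, p ≠ []
  isChain : ∀ p ∈ ps, p.IsChain R

variable {R}

theorem isChainPartition_singletons [Fintype α] :
    IsChainPartition R ((Finset.univ : Finset α).toList.map fun a => [a]) where
  nodup := by simpa only [← List.flatMap_def, List.flatMap_singleton'] using Finset.nodup_toList _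
  mem_flatten := by simp
  ne_nil := by simp
  isChain := by simp

theorem IsChainPartition.perm {ps ps' : List (List α)} (h : IsChainPartition R ps)
    (hperm : ps.Perm ps') : IsChainPartition R ps' where
  nodup := hperm.flatten.nodup_iff.1 h.nodup
  mem_flatten a := hperm.flatten.mem_iff.1 (h.mem_flatten a)
  ne_nil p hp := h.ne_nil p (hperm.mem_iff.2 hp)
  isChain p hp := h.isChain p (hperm.mem_iff.2 hp)

theorem IsChainPartition.merge (hR : ∀ a b, R a b → R b a) {p q : List α}
    {rest : List (List α)} (h : IsChainPartition R (p :: q :: rest)) {x y : α}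
    (hx : p.getLast? = some x) (hy : q.getLast? = some y) (hxy : R x y) :
    IsChainPartition R ((p ++ q.reverse) :: rest) := by
  have hperm : ((p ++ q.reverse) :: rest).flatten.Perm (p :: q :: rest).flatten := by
    simpa using (List.reverse_perm q).append_left p |>.append_right rest.flatten
  refine ⟨hperm.nodup_iff.2 h.nodup, fun a => hperm.mem_iff.2 (h.mem_flatten a), ?_, ?_⟩
  · simp only [List.mem_cons]
    rintro r (rfl | hr)
    · simp [h.ne_nil p (by simp)]
    · exact h.ne_nil r (by simp [hr])
  · simp only [List.mem_cons]
    rintro r (rfl | hr)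
    · refine (h.isChain p (by simp)).append ?_ ?_
      · exact List.isChain_reverse.2 ((h.isChain q (by simp)).imp fun a b hab => hR a b hab)
      · simp [hx, hy, hxy]
    · exact h.isChain r (by simp [hr])

end ChainPartition

theorem List.exists_perm_flatten_four {α : Type*} {ps : List (List α)}
    (hne : ∀ p ∈ ps, p ≠ []) (hlen : ps.length ≤ 4) :
    ∃ P₁ P₂ P₃ P₄ : List α, ps.flatten.Perm (P₁ ++ P₂ ++ P₃ ++ P₄) ∧
      (∀ P ∈ [P₁, P₂, P₃, P₄], P ∈ ps ∨ P = []) ∧ (P₂ = [] → P₁ = []) ∧ (P₃ = [] → P₄ = []) := by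
  rcases ps with _ | ⟨A, _ | ⟨B, _ | ⟨C, _ | ⟨D, _ | ⟨E, rest⟩⟩⟩⟩⟩
  · exact ⟨[], [], [], [], by simp⟩
  · exact ⟨[], A, [], [], by simp⟩
  · exact ⟨[], A, B, [], by simp⟩
  · refine ⟨C, A, B, [], ?_, by simp, by simp [hne A], by simp⟩
    simpa using List.perm_append_comm (l₁ := A ++ B) (l₂ := C)
  · refine ⟨C, A, B, D, ?_, by simp, by simp [hne A], by simp [hne B]⟩
    simpa using (List.perm_append_comm (l₁ := A ++ B) (l₂ := C)).append_right D
  · simp at hlen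
    omega

section CliqueFree

variable {V : Type*} {G : SimpleGraph V} {k : ℕ}

theorem SimpleGraph.CliqueFree.length_le_of_pairwise (hG : G.CliqueFree (k + 1)) {l : List V}
    (hl : l.Pairwise G.Adj) : l.length ≤ k := by
  classical
  by_contra! hk
  refine hG.mono hk l.toFinset ⟨?_, List.toFinset_card_of_nodup (hl.imp G.ne_of_adj)⟩
  have : Std.Symm G.Adj := ⟨fun _ _ h => h.symm⟩
  rw [isClique_iff, List.coe_toFinset]
  exact hl.set_pairwise

theorem IsChainPartition.exists_shorter_of_cliqueFree (hG : G.CliqueFree (k + 1))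
    {ps : List (List V)} (hps : IsChainPartition (fun a b => ¬ G.Adj a b) ps)
    (hk : k < ps.length) :
    ∃ ps', IsChainPartition (fun a b => ¬ G.Adj a b) ps' ∧ ps'.length < ps.length := by
  have hends : (ps.filterMap List.getLast?).length = ps.length := by
    rw [List.length_filterMap_eq_countP, List.countP_eq_length]
    intro p hp
    simpa [List.getLast?_isSome] using hps.ne_nil p hp
  have hnot : ¬ (ps.filterMap List.getLast?).Pairwise G.Adj := fun hpw => by
    have := hG.length_le_of_pairwise hpw
    omega
  rw [List.pairwise_filterMap, List.pairwise_iff_forall_sublist] at hnot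
  push Not at hnot
  obtain ⟨p, q, hsub, x, hx, y, hy, hxy⟩ := hnot
  obtain ⟨rest, hperm⟩ := hsub.exists_perm_append
  refine ⟨(p ++ q.reverse) :: rest,
    (hps.perm hperm).merge (fun a b hab h => hab h.symm) hx hy hxy, ?_⟩
  simp [hperm.length_eq]

theorem SimpleGraph.CliqueFree.exists_isChainPartition_length_le [Fintype V]
    (hG : G.CliqueFree (k + 1)) :
    ∃ ps, IsChainPartition (fun a b => ¬ G.Adj a b) ps ∧ ps.length ≤ k := by
  suffices ∀ m ps, IsChainPartition (fun a b => ¬ G.Adj a b) ps → ps.length = m →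
      ∃ ps, IsChainPartition (fun a b => ¬ G.Adj a b) ps ∧ ps.length ≤ k from
    this _ _ isChainPartition_singletons rfl
  intro m
  induction m using Nat.strong_induction_on with
  | _ m ih =>
    rintro ps hps rfl
    by_cases hk : ps.length ≤ k
    · exact ⟨ps, hps, hk⟩
    · obtain ⟨ps', hps', hlt⟩ := hps.exists_shorter_of_cliqueFree hG (by omega)
      exact ih _ hlt ps' hps' rfl

end CliqueFree

section Mycielski

variable {V : Type} {G : SimpleGraph V}

/-- The copies are listed in reverse so that they start with the copy of the last vertex of `P`
and end with the copy of the first vertex of `Q`. -/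
def mycielskiBlock (P Q : List V) : List (MycVert V) :=
  P.map Sum.inl ++ (Q ++ P).reverse.map (Sum.inr ∘ Sum.inl) ++ Q.map Sum.inl

theorem isChain_mycielskiBlock {P Q : List V} (hP : P.IsChain (fun a b => ¬ G.Adj a b))
    (hQ : Q.IsChain (fun a b => ¬ G.Adj a b)) :
    (mycielskiBlock P Q).IsChain (fun x y => ¬ (mycielski G).Adj x y) := by
  refine List.IsChain.append (List.IsChain.append ?_ ?_ ?_) ?_ ?_
  · exact (List.isChain_map _).2 hP
  · exact (List.isChain_map _).2 (List.pairwise_of_forall fun _ _ h => h).isChain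
  · cases h : P.getLast? <;> simp [h, mycielski, mycAdj]
  · exact (List.isChain_map _).2 hQ
  · cases h : Q.head? <;> simp [h, mycielski, mycAdj]

theorem head?_mycielskiBlock_isLeft {P Q : List V} (h : P = [] → Q = []) :
    ∀ x ∈ (mycielskiBlock P Q).head?, x.isLeft := by
  cases P <;> simp_all [mycielskiBlock]

theorem getLast?_mycielskiBlock_isLeft {P Q : List V} (h : Q = [] → P = []) :
    ∀ x ∈ (mycielskiBlock P Q).getLast?, x.isLeft := by
  rcases Q.eq_nil_or_concat with rfl | ⟨Q', v, rfl⟩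
  · simp [h rfl, mycielskiBlock]
  · simp only [mycielskiBlock, List.concat_eq_append, List.getLast?_append, List.getLast?_map]
    simp

theorem inl_mem_mycielskiBlock {P Q : List V} {v : V} :
    Sum.inl v ∈ mycielskiBlock P Q ↔ v ∈ P ∨ v ∈ Q := by
  simp [mycielskiBlock]

theorem inr_inl_mem_mycielskiBlock {P Q : List V} {v : V} :
    Sum.inr (Sum.inl v) ∈ mycielskiBlock P Q ↔ v ∈ P ∨ v ∈ Q := by
  simp [mycielskiBlock, or_comm]

theorem length_mycielskiBlock (P Q : List V) :
    (mycielskiBlock P Q).length = 2 * (P.length + Q.length) := by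
  simp only [mycielskiBlock, List.length_append, List.length_map, List.length_reverse]
  omega

def mycielskiRoute (P₁ P₂ P₃ P₄ : List V) : List (MycVert V) :=
  mycielskiBlock P₁ P₂ ++ Sum.inr (Sum.inr ()) :: mycielskiBlock P₃ P₄

theorem isChain_mycielskiRoute {P₁ P₂ P₃ P₄ : List V}
    (hchain : ∀ P ∈ [P₁, P₂, P₃, P₄], P.IsChain (fun a b => ¬ G.Adj a b))
    (h₁₂ : P₂ = [] → P₁ = []) (h₃₄ : P₃ = [] → P₄ = []) :
    (mycielskiRoute P₁ P₂ P₃ P₄).IsChain (fun x y => ¬ (mycielski G).Adj x y) := by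
  have hroot (x : MycVert V) (hx : x.isLeft) : ¬ (mycielski G).Adj x (Sum.inr (Sum.inr ())) ∧
      ¬ (mycielski G).Adj (Sum.inr (Sum.inr ())) x := by
    rcases x with _ | _ <;> simp_all [mycielski, mycAdj]
  refine List.IsChain.append (isChain_mycielskiBlock (hchain P₁ (by simp)) (hchain P₂ (by simp)))
    (List.isChain_cons.2 ⟨?_, ?_⟩) ?_
  · exact fun x hx => (hroot x (head?_mycielskiBlock_isLeft h₃₄ x hx)).2
  · exact isChain_mycielskiBlock (hchain P₃ (by simp)) (hchain P₄ (by simp))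
  · simpa using fun x hx => (hroot x (getLast?_mycielskiBlock_isLeft h₁₂ x hx)).1

theorem mem_mycielskiRoute {P₁ P₂ P₃ P₄ : List V} (hcover : ∀ v, v ∈ P₁ ++ P₂ ++ P₃ ++ P₄) :
    ∀ w, w ∈ mycielskiRoute P₁ P₂ P₃ P₄ := by
  rintro (v | v | ⟨⟩)
  · simpa [mycielskiRoute, inl_mem_mycielskiBlock, or_assoc] using hcover v
  · simpa [mycielskiRoute, inr_inl_mem_mycielskiBlock, or_assoc] using hcover v
  · simp [mycielskiRoute]

theorem length_mycielskiRoute (P₁ P₂ P₃ P₄ : List V) :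
    (mycielskiRoute P₁ P₂ P₃ P₄).length = 2 * (P₁ ++ P₂ ++ P₃ ++ P₄).length + 1 := by
  simp only [mycielskiRoute, List.length_append, List.length_cons, length_mycielskiBlock]
  omega

end Mycielski

/-- If `G` is a graph of order `n` with clique number `ω(G) ≤ 4` (i.e. no 5-clique), then
`λ(M(G)) ≤ 2n`. -/
theorem lambdaNumber_mycielski_of_cliqueFree {V : Type} [Fintype V] (G : SimpleGraph V)
    (n : ℕ) (hn : Fintype.card V = n) (h : G.CliqueFree 5) :
    lambdaNumber (mycielski G) ≤ 2 * n := by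
  obtain ⟨ps, hps, hlen⟩ := h.exists_isChainPartition_length_le (k := 4)
  obtain ⟨P₁, P₂, P₃, P₄, hperm, hmem, h₁₂, h₃₄⟩ := List.exists_perm_flatten_four hps.ne_nil hlen
  have hchain : ∀ P ∈ [P₁, P₂, P₃, P₄], P.IsChain (fun a b => ¬ G.Adj a b) := fun P hP =>
    (hmem P hP).elim (hps.isChain P) fun hnil => hnil ▸ List.isChain_nil
  have hcover (v : V) : v ∈ P₁ ++ P₂ ++ P₃ ++ P₄ := hperm.mem_iff.1 (hps.mem_flatten v)
  have hcard : (P₁ ++ P₂ ++ P₃ ++ P₄).length ≤ n :=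
    hn ▸ (hperm.nodup_iff.1 hps.nodup).length_le_card
  calc lambdaNumber (mycielski G) ≤ (mycielskiRoute P₁ P₂ P₃ P₄).length - 1 :=
        lambdaNumber_le_of_isChain_not_adj _ _ (mem_mycielskiRoute hcover)
          (isChain_mycielskiRoute hchain h₁₂ h₃₄)
    _ ≤ 2 * n := by
        rw [length_mycielskiRoute]
        omega
end

section
/- For the path P_n, the Mycielski graph satisfies λ(M(P_n)) = 6 for n ∈ {3,4}, λ(M(P_5)) = 7, and λ(M(P_n)) = n + 1 for all n ≥ 6. -/
open SimpleGraph

/-!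
The `n` copies `u_i` are pairwise at distance two through the root `w`, which is adjacent to all
of them. So an `L(2,1)`-labeling with span `k` gives the copies `n` distinct labels in `[0, k]`
avoiding `f w - 1, f w, f w + 1`: hence `k ≥ n + 1`, and `k ≥ n + 2` unless `f w ∈ {0, k}`.
For `n ≥ 7` the span `n + 1` is attained with `f u_i = i + 2`, `f w = 0` and the path labelled
`5, 7, 1, n + 1, 2, 4` followed by the period `1, 3, 5`; for `3 ≤ n ≤ 6` explicit labelings
suffice. For `n = 3, 4` seven vertices pairwise at distance at most two force
span `6`. For `n = 5` and span `6` we may take `f w = 0`; then `[0, 6]` is exactly the label set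
of several such seven-vertex sets, which forces `f v_2 = 1` and
`f v_0, f v_1, f v_3, f v_4 = f u_3, f u_4, f u_0, f u_1`, and the four labels `f u_0, f u_1,
f u_3, f u_4 ∈ [3, 6]` would have to differ by two around a four-cycle.
-/

namespace SimpleGraph

variable {V : Type} {G : SimpleGraph V}

theorem dist_eq_two_iff {u v : V} :
    G.dist u v = 2 ↔ u ≠ v ∧ ¬ G.Adj u v ∧ (G.commonNeighbors u v).Nonempty := by
  rw [dist, ENat.toNat_eq_iff two_ne_zero]
  exact_mod_cast edist_eq_two_iff

def square (G : SimpleGraph V) : SimpleGraph V :=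
  fromRel fun x y => G.Adj x y ∨ ∃ z, G.Adj x z ∧ G.Adj z y

theorem square_adj {x y : V} :
    G.square.Adj x y ↔ x ≠ y ∧ (G.Adj x y ∨ ∃ z, G.Adj x z ∧ G.Adj z y) := by
  simp only [square, fromRel_adj, and_congr_right_iff]
  intro _
  constructor
  · rintro ((h | ⟨z, hxz, hzy⟩) | (h | ⟨z, hyz, hzx⟩))
    exacts [.inl h, .inr ⟨z, hxz, hzy⟩, .inl h.symm, .inr ⟨z, hzx.symm, hyz.symm⟩]
  · exact .inl

instance [Fintype V] [DecidableEq V] [DecidableRel G.Adj] : DecidableRel G.square.Adj :=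
  fun _ _ => decidable_of_iff _ square_adj.symm

end SimpleGraph

section Labeling

variable {V : Type} {G : SimpleGraph V} {f : V → ℕ} {k : ℕ}

theorem isL21Labeling_iff :
    IsL21Labeling G f ↔ (∀ x y, G.Adj x y → 2 ≤ ((f x : ℤ) - f y).natAbs) ∧
      ∀ x y z, G.Adj x y → G.Adj y z → x ≠ z → f x ≠ f z := by
  refine and_congr_right fun hadj => ⟨fun h x y z hxy hyz hxz => ?_, fun h x z hxz => ?_⟩
  · by_cases hxz' : G.Adj x z
    · have := hadj x z hxz'
      omega
    · exact h x z (dist_eq_two_iff.2 ⟨hxz, hxz', y, hxy, hyz.symm⟩)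
  · obtain ⟨hne, -, y, hxy, hzy⟩ := dist_eq_two_iff.1 hxz
    exact h x y z hxy hzy.symm hne

namespace IsL21Labeling

theorem ne_of_square_adj (hf : IsL21Labeling G f) {x y : V} (hxy : G.square.Adj x y) :
    f x ≠ f y := by
  obtain ⟨hne, hadj | ⟨z, hxz, hzy⟩⟩ := square_adj.1 hxy
  · have := hf.1 x y hadj
    omega
  · exact (isL21Labeling_iff.1 hf).2 x z y hxz hzy hne

theorem injOn_of_isClique (hf : IsL21Labeling G f) {s : Set V} (hs : G.square.IsClique s) :
    s.InjOn f := fun _ hx _ hy hxy => by_contra fun hne => hf.ne_of_square_adj (hs hx hy hne) hxy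

theorem le_succ_of_isNClique (hf : IsL21Labeling G f) (hb : ∀ v, f v ≤ k) {s : Finset V}
    {m : ℕ} (hs : G.square.IsNClique m s) : m ≤ k + 1 := by
  simpa [hs.card_eq] using Finset.card_le_card_of_injOn f (t := Finset.range (k + 1))
    (fun v _ => Finset.mem_range.2 (Nat.lt_succ_of_le (hb v))) (hf.injOn_of_isClique hs.isClique)

theorem exists_eq_of_isNClique [DecidableEq V] (hf : IsL21Labeling G f) (hb : ∀ v, f v ≤ k)
    {s : Finset V} (hs : G.square.IsNClique (k + 1) s) {m : ℕ} (hm : m ≤ k) :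
    ∃ x ∈ s, f x = m := by
  have himage : s.image f = Finset.range (k + 1) := by
    refine Finset.eq_of_subset_of_card_le (fun _ h => ?_) ?_
    · obtain ⟨v, -, rfl⟩ := Finset.mem_image.1 h
      exact Finset.mem_range.2 (Nat.lt_succ_of_le (hb v))
    · rw [Finset.card_image_of_injOn (hf.injOn_of_isClique hs.isClique), hs.card_eq,
        Finset.card_range]
  simpa [← Finset.mem_image, himage] using Nat.lt_succ_of_le hm

theorem eq_of_isNClique_insert [DecidableEq V] (hf : IsL21Labeling G f) (hb : ∀ v, f v ≤ k)
    {s : Finset V} {x y : V} (hy : y ∉ s) (hxs : G.square.IsNClique (k + 1) (insert x s))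
    (hys : G.square.IsNClique (k + 1) (insert y s)) : f x = f y := by
  obtain ⟨z, hz, hzy⟩ := hf.exists_eq_of_isNClique hb hxs (hb y)
  rcases Finset.mem_insert.1 hz with rfl | hz
  · exact hzy
  · obtain rfl := hf.injOn_of_isClique hys.isClique (by simp [hz]) (by simp) hzy
    exact absurd hz hy

theorem const_sub (hf : IsL21Labeling G f) (hb : ∀ v, f v ≤ k) :
    IsL21Labeling G fun v => k - f v := by
  refine ⟨fun x y hxy => ?_, fun x y hxy => ?_⟩
  · have := hf.1 x y hxy; have := hb x; have := hb y; dsimp only; omega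
  · have := hf.2 x y hxy; have := hb x; have := hb y; dsimp only; omega

end IsL21Labeling

theorem lambdaNumber_eq {m : ℕ} (f : V → ℕ) (hf : IsL21Labeling G f) (hfm : ∀ v, f v ≤ m)
    (hm : ∀ g k, IsL21Labeling G g → (∀ v, g v ≤ k) → m ≤ k) : lambdaNumber G = m :=
  le_antisymm (Nat.sInf_le ⟨f, hf, hfm⟩)
    (le_csInf ⟨m, f, hf, hfm⟩ fun _ ⟨g, hg, hgk⟩ => hm g _ hg hgk)

end Labeling

abbrev mycRoot {V : Type} : MycVert V := .inr (.inr ())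

abbrev mycCopy {V : Type} (v : V) : MycVert V := .inr (.inl v)

section Mycielski

variable {V : Type} {G : SimpleGraph V} {k : ℕ}

instance [DecidableRel G.Adj] : DecidableRel (mycielski G).Adj
  | .inl a, .inl b => inferInstanceAs (Decidable (G.Adj a b))
  | .inl a, .inr (.inl b) => inferInstanceAs (Decidable (G.Adj a b))
  | .inr (.inl a), .inl b => inferInstanceAs (Decidable (G.Adj a b))
  | .inr (.inl _), .inr (.inr _) => isTrue trivial
  | .inr (.inr _), .inr (.inl _) => isTrue trivial
  | .inl _, .inr (.inr _) | .inr (.inr _), .inl _ => isFalse id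
  | .inr (.inl _), .inr (.inl _) | .inr (.inr _), .inr (.inr _) => isFalse id

theorem mycielski_adj_root_copy (v : V) : (mycielski G).Adj mycRoot (mycCopy v) := trivial

theorem mycielski_square_adj_copy_copy {v w : V} (h : v ≠ w) :
    (mycielski G).square.Adj (mycCopy v) (mycCopy w) :=
  square_adj.2 ⟨by simpa using h, .inr ⟨mycRoot, trivial, trivial⟩⟩

theorem isL21Labeling_mycielski {g h : V → ℕ} {c : ℕ}
    (hgg : ∀ x y, G.Adj x y → 2 ≤ ((g x : ℤ) - g y).natAbs)
    (hgh : ∀ x y, G.Adj x y → 2 ≤ ((g x : ℤ) - h y).natAbs)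
    (hhc : ∀ x, 2 ≤ ((h x : ℤ) - c).natAbs)
    (hh : Function.Injective h)
    (hgg₂ : ∀ x y z, G.Adj x y → G.Adj y z → x ≠ z → g x ≠ g z)
    (hgh₂ : ∀ x y z, G.Adj x y → G.Adj y z → g x ≠ h z)
    (hgc : ∀ x y, G.Adj x y → g x ≠ c) :
    IsL21Labeling (mycielski G) (Sum.elim g (Sum.elim h fun _ => c)) := by
  refine isL21Labeling_iff.2 ⟨?_, ?_⟩
  · rintro (x | x | x) (y | y | y) hxy <;> try exact hxy.elim
    · exact hgg x y hxy
    · exact hgh x y hxy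
    · have := hgh y x hxy.symm
      dsimp only [Sum.elim_inl, Sum.elim_inr]
      omega
    · exact hhc x
    · have := hhc y
      dsimp only [Sum.elim_inl, Sum.elim_inr]
      omega
  · rintro (x | x | x) (y | y | y) (z | z | z) hxy hyz hxz <;>
      try first | exact hxy.elim | exact hyz.elim
    · exact hgg₂ x y z hxy hyz (by simpa using hxz)
    · exact hgh₂ x y z hxy hyz
    · exact hgg₂ x y z hxy hyz (by simpa using hxz)
    · exact hgc x y hxy
    · exact (hgh₂ z y x hyz.symm hxy.symm).symm
    · exact hh.ne (by simpa using hxz)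
    · exact hh.ne (by simpa using hxz)
    · exact (hgc z y hyz.symm).symm
    · exact absurd (by rw [Subsingleton.elim x z]) hxz

namespace IsL21Labeling

variable [Fintype V]

theorem card_le_mycielski {f : MycVert V → ℕ} (hf : IsL21Labeling (mycielski G) f)
    (hb : ∀ v, f v ≤ k) : Fintype.card V ≤ (f mycRoot - 1) + (k - 1 - f mycRoot) := by
  set c := f mycRoot
  have hinj : Function.Injective fun v => f (mycCopy v) := fun v w hvw =>
    by_contra fun hne => hf.ne_of_square_adj (mycielski_square_adj_copy_copy hne) hvw
  have hmaps : ∀ v ∈ (Finset.univ : Finset V),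
      f (mycCopy v) ∈ Finset.range (c - 1) ∪ Finset.Icc (c + 2) k := fun v _ => by
    have := hf.1 _ _ (mycielski_adj_root_copy v)
    have := hb (mycCopy v)
    simp only [Finset.mem_union, Finset.mem_range, Finset.mem_Icc]
    omega
  calc Fintype.card V = (Finset.univ : Finset V).card := Finset.card_univ.symm
    _ ≤ (Finset.range (c - 1) ∪ Finset.Icc (c + 2) k).card :=
      Finset.card_le_card_of_injOn _ hmaps hinj.injOn
    _ ≤ (Finset.range (c - 1)).card + (Finset.Icc (c + 2) k).card := Finset.card_union_le _ _
    _ = (c - 1) + (k - 1 - c) := by simp only [Finset.card_range, Nat.card_Icc]; omega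

theorem card_add_one_le_mycielski [Nonempty V] {f : MycVert V → ℕ}
    (hf : IsL21Labeling (mycielski G) f) (hb : ∀ v, f v ≤ k) : Fintype.card V + 1 ≤ k := by
  have := hf.card_le_mycielski hb
  have := hb mycRoot
  have := Fintype.card_pos (α := V)
  omega

theorem mycielski_root_eq_zero_or_eq {f : MycVert V → ℕ} (hf : IsL21Labeling (mycielski G) f)
    (hb : ∀ v, f v ≤ k) (hk : k ≤ Fintype.card V + 1) : f mycRoot = 0 ∨ f mycRoot = k := by
  have := hf.card_le_mycielski hb
  have := hb mycRoot
  omega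

end IsL21Labeling

end Mycielski

instance (n : ℕ) : DecidableRel (pathGraph n).Adj :=
  fun _ _ => decidable_of_iff _ pathGraph_adj.symm

/-- Copy `i` gets label `i + 2` and the root `0`; `hgap` keeps `g i` off the labels
`i, …, i + 4` of the copies within distance two of vertex `i`. -/
theorem isL21Labeling_mycielski_pathGraph {n : ℕ} {g : ℕ → ℕ}
    (hgap : ∀ i < n, g i < i ∨ i + 5 ≤ g i) (hpos : ∀ i < n, 0 < g i)
    (hstep : ∀ i, i + 1 < n → 2 ≤ ((g i : ℤ) - g (i + 1)).natAbs)
    (hskip : ∀ i, i + 2 < n → g i ≠ g (i + 2)) :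
    IsL21Labeling (mycielski (pathGraph n))
      (Sum.elim (fun i => g i) (Sum.elim (fun i => i + 2) fun _ => 0)) := by
  refine isL21Labeling_mycielski (fun i j hij => ?_) (fun i j hij => ?_) (fun i => by omega)
    (fun i j hij => Fin.ext (by omega)) (fun i j l hij hjl hil => ?_) (fun i j l hij hjl => ?_)
    (fun i _ _ => (hpos i i.isLt).ne')
  · rcases pathGraph_adj.1 hij with h | h
    · have := hstep i (h ▸ j.isLt)
      rwa [h] at this
    · have := hstep j (h ▸ i.isLt)
      rw [h] at this
      omega
  · have := hgap i i.isLt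
    rcases pathGraph_adj.1 hij with h | h <;> omega
  · have hil' : (i : ℕ) ≠ l := Fin.val_ne_of_ne hil
    rcases pathGraph_adj.1 hij with h | h <;> rcases pathGraph_adj.1 hjl with h' | h'
    · have := hskip i (by omega)
      rwa [show (l : ℕ) = i + 2 by omega]
    · omega
    · omega
    · have := hskip l (by omega)
      rw [show (i : ℕ) = l + 2 by omega]
      exact this.symm
  · have := hgap i i.isLt
    rcases pathGraph_adj.1 hij with h | h <;> rcases pathGraph_adj.1 hjl with h' | h' <;> omega

def bigPathLabel (n : ℕ) : ℕ → ℕ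
  | 0 => 5
  | 1 => 7
  | 2 => 1
  | 3 => n + 1
  | 4 => 2
  | 5 => 4
  | i + 6 => 2 * (i % 3) + 1

theorem isL21Labeling_mycielski_pathGraph_bigPathLabel {n : ℕ} (hn : 7 ≤ n) :
    IsL21Labeling (mycielski (pathGraph n))
      (Sum.elim (fun i => bigPathLabel n i) (Sum.elim (fun i => i + 2) fun _ => 0)) := by
  refine isL21Labeling_mycielski_pathGraph ?_ ?_ ?_ ?_ <;>
    rintro (_ | _ | _ | _ | _ | _ | i) hi <;> simp [bigPathLabel, Nat.add_mod] <;> omega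

theorem bigPathLabel_le {n : ℕ} (hn : 7 ≤ n) (v : MycVert (Fin n)) :
    Sum.elim (fun i : Fin n => bigPathLabel n i) (Sum.elim (fun i : Fin n => i + 2) fun _ => 0)
      v ≤ n + 1 := by
  rcases v with ⟨_ | _ | _ | _ | _ | _ | i, hi⟩ | ⟨i, hi⟩ | _ <;>
    simp [bigPathLabel] <;> omega

theorem lambdaNumber_mycielski_pathGraph_three : lambdaNumber (mycielski (pathGraph 3)) = 6 :=
  lambdaNumber_eq (Sum.elim ![1, 6, 3] (Sum.elim ![2, 5, 4] fun _ => 0))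
    (isL21Labeling_iff.2 (by decide)) (by decide) fun _ _ hf hb =>
      Nat.le_of_succ_le_succ (hf.le_succ_of_isNClique hb (s := Finset.univ) (by decide))

theorem lambdaNumber_mycielski_pathGraph_four : lambdaNumber (mycielski (pathGraph 4)) = 6 :=
  lambdaNumber_eq (Sum.elim ![4, 1, 6, 3] (Sum.elim ![3, 2, 5, 4] fun _ => 0))
    (isL21Labeling_iff.2 (by decide)) (by decide) fun _ _ hf hb =>
      Nat.le_of_succ_le_succ (hf.le_succ_of_isNClique hb
        (s := {mycRoot, mycCopy 0, mycCopy 1, mycCopy 2, mycCopy 3, .inl 1, .inl 2}) (by decide))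

theorem IsL21Labeling.mycielski_pathGraph_five_root_ne_zero {f : MycVert (Fin 5) → ℕ}
    (hf : IsL21Labeling (mycielski (pathGraph 5)) f) (hb : ∀ v, f v ≤ 6) : f mycRoot ≠ 0 := by
  intro hroot
  have sep : ∀ x y, (mycielski (pathGraph 5)).Adj x y → 2 ≤ ((f x : ℤ) - f y).natAbs := hf.1
  have hcopy (i : Fin 5) : f (mycCopy i) ≠ 1 := by
    have := sep _ _ (mycielski_adj_root_copy i)
    omega
  have hv2 : f (.inl 2) = 1 := by
    obtain ⟨x, hx, hx1⟩ := hf.exists_eq_of_isNClique hb (m := 1)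
      (s := {mycRoot, mycCopy 0, mycCopy 1, mycCopy 2, mycCopy 3, mycCopy 4, .inl 2}) (by decide)
      (by norm_num)
    simp only [Finset.mem_insert, Finset.mem_singleton] at hx
    rcases hx with rfl | rfl | rfl | rfl | rfl | rfl | rfl
    · omega
    iterate 5 exact absurd hx1 (hcopy _)
    exact hx1
  -- Each `insert x s` below is a 7-clique of the square, so its labels are all of `[0, 6]`.
  have hv1 : f (.inl 1) = f (mycCopy 4) := hf.eq_of_isNClique_insert hb
    (s := {mycRoot, mycCopy 0, mycCopy 1, mycCopy 2, mycCopy 3, .inl 2}) (by decide) (by decide)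
    (by decide)
  have hv3 : f (.inl 3) = f (mycCopy 0) := hf.eq_of_isNClique_insert hb
    (s := {mycRoot, mycCopy 1, mycCopy 2, mycCopy 3, mycCopy 4, .inl 2}) (by decide) (by decide)
    (by decide)
  have hv0 : f (.inl 0) = f (mycCopy 3) := hf.eq_of_isNClique_insert hb
    (s := {mycRoot, mycCopy 0, mycCopy 1, mycCopy 2, .inl 1, .inl 2}) (by decide) (by decide)
    (by decide)
  have hv4 : f (.inl 4) = f (mycCopy 1) := hf.eq_of_isNClique_insert hb
    (s := {mycRoot, mycCopy 2, mycCopy 3, mycCopy 4, .inl 3, .inl 2}) (by decide) (by decide)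
    (by decide)
  -- `f u_0, f u_1, f u_3, f u_4 ∈ [3, 6]` are distinct and differ by two along `u_0 u_1 u_3 u_4`.
  have := sep (.inl 1) (.inl 2) (by decide)
  have := sep (.inl 3) (.inl 2) (by decide)
  have := sep (.inl 2) (mycCopy 1) (by decide)
  have := sep (.inl 2) (mycCopy 3) (by decide)
  have := sep (.inl 0) (.inl 1) (by decide)
  have := sep (.inl 0) (mycCopy 1) (by decide)
  have := sep (.inl 1) (mycCopy 0) (by decide)
  have := sep (.inl 3) (.inl 4) (by decide)
  have := hf.ne_of_square_adj (mycielski_square_adj_copy_copy (show (0 : Fin 5) ≠ 3 by decide))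
  have := hf.ne_of_square_adj (mycielski_square_adj_copy_copy (show (1 : Fin 5) ≠ 4 by decide))
  have := hb (mycCopy 0)
  have := hb (mycCopy 1)
  have := hb (mycCopy 3)
  have := hb (mycCopy 4)
  omega

theorem lambdaNumber_mycielski_pathGraph_five : lambdaNumber (mycielski (pathGraph 5)) = 7 :=
  lambdaNumber_eq (Sum.elim ![1, 4, 7, 1, 3] (Sum.elim ![2, 3, 6, 5, 4] fun _ => 0))
    (isL21Labeling_iff.2 (by decide)) (by decide) fun f k hf hb => by
      by_contra! hk
      have hb6 : ∀ v, f v ≤ 6 := fun v => (hb v).trans (by omega)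
      rcases hf.mycielski_root_eq_zero_or_eq hb6 (by simp) with h0 | h6
      · exact hf.mycielski_pathGraph_five_root_ne_zero hb6 h0
      · exact (hf.const_sub hb6).mycielski_pathGraph_five_root_ne_zero (fun _ => Nat.sub_le _ _)
          (by simp [h6])

theorem lambdaNumber_mycielski_pathGraph_of_six_le {n : ℕ} (hn : 6 ≤ n) :
    lambdaNumber (mycielski (pathGraph n)) = n + 1 := by
  have hlb (f : MycVert (Fin n) → ℕ) (k : ℕ) (hf : IsL21Labeling (mycielski (pathGraph n)) f)
      (hb : ∀ v, f v ≤ k) : n + 1 ≤ k := by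
    have : Nonempty (Fin n) := ⟨⟨0, by omega⟩⟩
    simpa using hf.card_add_one_le_mycielski hb
  obtain rfl | hn := hn.eq_or_lt
  · exact lambdaNumber_eq (Sum.elim ![1, 4, 7, 1, 3, 6] (Sum.elim ![2, 3, 6, 5, 4, 7] fun _ => 0))
      (isL21Labeling_iff.2 (by decide)) (by decide) hlb
  · exact lambdaNumber_eq _ (isL21Labeling_mycielski_pathGraph_bigPathLabel hn)
      (bigPathLabel_le hn) hlb

/-- `λ(M(P_n)) = 6` for `n ∈ {3,4}`, `λ(M(P_5)) = 7`, and `λ(M(P_n)) = n + 1` for `n ≥ 6`. -/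
theorem lambdaNumber_mycielski_pathGraph :
    lambdaNumber (mycielski (SimpleGraph.pathGraph 3)) = 6 ∧
    lambdaNumber (mycielski (SimpleGraph.pathGraph 4)) = 6 ∧
    lambdaNumber (mycielski (SimpleGraph.pathGraph 5)) = 7 ∧
    ∀ n : ℕ, 6 ≤ n → lambdaNumber (mycielski (SimpleGraph.pathGraph n)) = n + 1 :=
  ⟨lambdaNumber_mycielski_pathGraph_three, lambdaNumber_mycielski_pathGraph_four,
    lambdaNumber_mycielski_pathGraph_five, fun _ => lambdaNumber_mycielski_pathGraph_of_six_le⟩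
end
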